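/- Let $l,u\in\mathbb{R}^n$ with $l_i \le u_i$ for all $i$, and let $[\cdot]_{[l,u]}$ denote the componentwise projection onto the box $X=\{x : l \le x \le u\}$, i.e. $([z]_{[l,u]})_i = \max\{l_i,\min\{u_i, z_i\}\}$. Let $\alpha,\beta\in\mathbb{R}$ be nonzero with the same sign, let $x\in X$ and $p\in\mathbb{R}^n$. Then $[x+(\alpha+\beta)p]_{[l,u]} = [[x+\alpha p]_{[l,u]} + \beta p]_{[l,u]}$. -/
import Mathlib

lemma key_clamp (l u a s t : ℝ) (hlu : l ≤ u) (ha1 : l ≤ a) (ha2 : a ≤ u)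
    (hst : 0 ≤ s * t) :
    max l (min u (a + s + t)) = max l (min u (max l (min u (a + s)) + t)) := by
  rcases mul_nonneg_iff.mp hst with ⟨hs, ht⟩ | ⟨hs, ht⟩ <;>
    · simp only [min_def, max_def]
      split_ifs <;> linarith

/-- Box projection commutes with splitting a step `(α+β)p` into two same-sign steps. -/
theorem stmt_0 (n : ℕ) (l u : Fin n → ℝ) (hlu : ∀ i, l i ≤ u i)
    (proj : (Fin n → ℝ) → (Fin n → ℝ))
    (hproj : ∀ z i, proj z i = max (l i) (min (u i) (z i)))
    (α β : ℝ) (hα : α ≠ 0) (hβ : β ≠ 0) (hsign : Real.sign α = Real.sign β)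
    (x : Fin n → ℝ) (hx : ∀ i, l i ≤ x i ∧ x i ≤ u i) (p : Fin n → ℝ) :
    proj (x + (α + β) • p) = proj (proj (x + α • p) + β • p) := by
  have hab : 0 < α * β := by
    rcases lt_trichotomy α 0 with h | h | h
    · rcases lt_trichotomy β 0 with hb | hb | hb
      · nlinarith
      · exact absurd hb hβ
      · rw [Real.sign_of_neg h, Real.sign_of_pos hb] at hsign; norm_num at hsign
    · exact absurd h hα
    · rcases lt_trichotomy β 0 with hb | hb | hb
      · rw [Real.sign_of_pos h, Real.sign_of_neg hb] at hsign; norm_num at hsign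
      · exact absurd hb hβ
      · nlinarith
  funext i
  simp only [hproj, Pi.add_apply, Pi.smul_apply, smul_eq_mul, add_mul]
  rw [← add_assoc]
  exact key_clamp (l i) (u i) (x i) (α * p i) (β * p i) (hlu i) (hx i).1 (hx i).2
    (by nlinarith [sq_nonneg (p i)])
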